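/- arXiv:2409.06008 — 2 statements merged into one kernel-verified Lean document; each statement's English description precedes it below -/
import Mathlib

section
/- If any honest node receives 2t+1 READY(v) messages from distinct nodes (with at most t faulty nodes), then at least t+1 honest nodes sent READY(v); consequently, by the amplification rule (an honest node sends READY(v) upon receiving t+1 READY(v) messages), eventually every honest node sends READY(v) and every honest node receives at least 2t+1 READY(v) messages, where honest nodes number n - t ≥ 2t + 1. -/
open Finset

/-- Pigeonhole plus amplification for READY messages: if an honest node receives READY(v) from a
set `R` of at least `2t+1` distinct senders (`R ⊆ sent`), with `|F| ≤ t`, then at least `t+1`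
honest nodes sent READY(v); and under the amplification rule (an honest node sends READY(v)
once `t+1` nodes have sent it), every honest node eventually sends READY(v) and every honest node
receives at least `2t+1` READY(v) messages. -/
theorem stmt_4 {n t : ℕ} (hn : 3 * t + 1 ≤ n)
    (F : Finset (Fin n)) (hF : F.card ≤ t)
    (sent : Finset (Fin n))
    (R : Finset (Fin n)) (hRsent : R ⊆ sent) (hR : 2 * t + 1 ≤ R.card)
    (hrule : ∀ i : Fin n, i ∉ F → t + 1 ≤ sent.card → i ∈ sent) :
    t + 1 ≤ (R \ F).card ∧ (∀ i : Fin n, i ∉ F → i ∈ sent) ∧ 2 * t + 1 ≤ sent.card := by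
  have hsent : 2 * t + 1 ≤ sent.card := le_trans hR (card_le_card hRsent)
  have h1 : t + 1 ≤ (R \ F).card := by
    have := le_card_sdiff F R
    omega
  exact ⟨h1, fun i hi => hrule i hi (by omega), hsent⟩
end

section
/- Graph lemma: Let G be a graph on the vertex set P = {1, ..., n - t} with n ≥ 3t + 1. Suppose there is a distinguished vertex i⋆ ∈ P and a set C ⊆ P \ {i⋆} with |C| ≥ n - 2t - 1 such that every vertex in C is adjacent to i⋆ and has degree at least n - 2t in G. Let k = ⌊t/5⌋ + 1 and define D = { i ∈ P \ {i⋆} : i has at least k neighbors in C }. Then |D| ≥ n - 9t/4 - 1. -/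
open Finset

/-- Graph lemma: on a graph with `n - t` vertices (`n ≥ 3t+1`), given a vertex `i⋆` and a set
`C` of at least `n - 2t - 1` vertices, each adjacent to `i⋆` and of degree at least `n - 2t`,
the set `D` of vertices other than `i⋆` having at least `k = ⌊t/5⌋ + 1` neighbors in `C`
satisfies `|D| ≥ n - 9t/4 - 1`, i.e. `4|D| ≥ 4n - 9t - 4`. -/
theorem stmt_5 {n t : ℕ} (hn : 3 * t + 1 ≤ n)
    {V : Type*} [Fintype V] [DecidableEq V] (hV : Fintype.card V = n - t)
    (G : SimpleGraph V) [DecidableRel G.Adj]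
    (istar : V) (C : Finset V) (histar : istar ∉ C)
    (hC : n - 2 * t - 1 ≤ C.card)
    (hadj : ∀ i ∈ C, G.Adj i istar)
    (hdeg : ∀ i ∈ C, n - 2 * t ≤ G.degree i) :
    (4 : ℤ) * n - 9 * t - 4 ≤
      4 * ((Finset.univ.filter
        (fun i => i ≠ istar ∧ t / 5 + 1 ≤ (C.filter (fun j => G.Adj i j)).card)).card : ℤ) := by
  classical
  set D := Finset.univ.filter
      (fun i => i ≠ istar ∧ t / 5 + 1 ≤ (C.filter (fun j => G.Adj i j)).card) with hD
  set f : V → ℕ := fun v => (C.filter (fun j => G.Adj v j)).card with hf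
  set S := Finset.univ.filter (fun i => i = istar ∨ t / 5 + 1 ≤ f i) with hS
  set S' := Finset.univ.filter (fun i => ¬ (i = istar ∨ t / 5 + 1 ≤ f i)) with hS'
  -- double counting
  have hsum : ∑ v : V, f v = ∑ j ∈ C, G.degree j := by
    simp only [hf, Finset.card_filter]
    rw [Finset.sum_comm]
    refine Finset.sum_congr rfl fun j hj => ?_
    rw [← Finset.card_filter, ← SimpleGraph.card_neighborFinset_eq_degree]
    congr 1
    ext v
    simp [SimpleGraph.mem_neighborFinset, G.adj_comm]
  have hlow : C.card * (n - 2 * t) ≤ ∑ v : V, f v := by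
    rw [hsum]
    calc C.card * (n - 2 * t) = ∑ _j ∈ C, (n - 2 * t) := by
          rw [Finset.sum_const, smul_eq_mul]
      _ ≤ ∑ j ∈ C, G.degree j := Finset.sum_le_sum hdeg
  have hsplit : ∑ v : V, f v = ∑ v ∈ S, f v + ∑ v ∈ S', f v :=
    (Finset.sum_filter_add_sum_filter_not univ _ f).symm
  have hb1 : ∑ v ∈ S, f v ≤ S.card * C.card := by
    calc ∑ v ∈ S, f v ≤ ∑ _v ∈ S, C.card :=
          Finset.sum_le_sum fun v _ => Finset.card_filter_le _ _
      _ = S.card * C.card := by rw [Finset.sum_const, smul_eq_mul]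
  have hb2 : ∑ v ∈ S', f v ≤ S'.card * (t / 5) := by
    calc ∑ v ∈ S', f v ≤ ∑ _v ∈ S', (t / 5) := by
          refine Finset.sum_le_sum fun v hv => ?_
          simp only [hS', Finset.mem_filter, Finset.mem_univ, true_and] at hv
          push_neg at hv
          omega
      _ = S'.card * (t / 5) := by rw [Finset.sum_const, smul_eq_mul]
  have hcards : S.card + S'.card = n - t := by
    rw [hS, hS', Finset.card_filter_add_card_filter_not, Finset.card_univ, hV]
  have hSD : S.card ≤ D.card + 1 := by
    have hsub : S ⊆ insert istar D := by
      intro v hv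
      simp only [hS, Finset.mem_filter, Finset.mem_univ, true_and] at hv
      by_cases hvi : v = istar
      · exact Finset.mem_insert.2 (Or.inl hvi)
      · refine Finset.mem_insert.2 (Or.inr ?_)
        rcases hv with h | h
        · exact absurd h hvi
        · simp only [hD, Finset.mem_filter, Finset.mem_univ, true_and]
          exact ⟨hvi, h⟩
    exact le_trans (Finset.card_le_card hsub) (Finset.card_insert_le _ _)
  -- main inequality
  have key : C.card * (n - 2 * t) ≤ S.card * C.card + S'.card * (t / 5) := by
    calc C.card * (n - 2 * t) ≤ ∑ v : V, f v := hlow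
      _ = ∑ v ∈ S, f v + ∑ v ∈ S', f v := hsplit
      _ ≤ S.card * C.card + S'.card * (t / 5) := Nat.add_le_add hb1 hb2
  -- move to integers
  have h2t : 2 * t ≤ n := by omega
  have hq5 : 5 * (t / 5) ≤ t := by omega
  zify [h2t] at key
  set c : ℤ := (C.card : ℤ) with hc
  set d : ℤ := (D.card : ℤ) with hdz
  set s : ℤ := (S.card : ℤ) with hsz
  set s' : ℤ := (S'.card : ℤ) with hs'z
  set q : ℤ := ((t / 5 : ℕ) : ℤ) with hqz
  have hcZ : (n : ℤ) - 2 * t - 1 ≤ c := by omega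
  have hsum2 : s + s' = (n : ℤ) - t := by omega
  have hSDz : s ≤ d + 1 := by rw [hsz, hdz]; exact_mod_cast hSD
  have hqT : 5 * q ≤ (t : ℤ) := by omega
  have hq0 : 0 ≤ q := by positivity
  have hc0 : 0 ≤ c := by positivity
  have hd0 : 0 ≤ d := by positivity
  have hs0 : 0 ≤ s := by positivity
  have hs'0 : 0 ≤ s' := by positivity
  have hnZ : 3 * (t : ℤ) + 1 ≤ n := by exact_mod_cast hn
  have ht0 : (0 : ℤ) ≤ t := by positivity
  -- c ≥ q
  have hqdiv : (t : ℤ) / 5 = q := by rw [hqz]; omega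
  rw [hqdiv] at key
  have hq4 : (t : ℤ) ≤ 5 * q + 4 := by rw [hqz]; omega
  clear_value c d s s' q
  clear hc hdz hsz hs'z hqz hD hS hS' hsum hlow hsplit hb1 hb2 hcards hSD hC hdeg hadj histar hV hq5 hqdiv
  clear hf S' S D f
  have hcq : q ≤ c := by linarith
  -- key2 : c * (n - 2t) ≤ (d+1) * (c - q) + (n - t) * q
  have key2 : c * ((n : ℤ) - 2 * t) ≤ (d + 1) * (c - q) + ((n : ℤ) - t) * q := by
    have e1 : s * c + s' * q = s * (c - q) + ((n : ℤ) - t) * q := by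
      rw [← hsum2]; ring
    have e2 : s * (c - q) ≤ (d + 1) * (c - q) :=
      mul_le_mul_of_nonneg_right hSDz (by linarith)
    linarith
  by_cases hd : (n : ℤ) - 2 * t - 1 ≤ d
  · linarith
  · push_neg at hd
    clear key
    set x : ℤ := (n : ℤ) - 2 * t - 1 - d with hx
    clear_value x
    have hx1 : 1 ≤ x := by omega
    have hcx : c * x ≤ (x + t) * q := by
      have ecx : c * x - (x + (t : ℤ)) * q =
          c * ((n : ℤ) - 2 * t) - ((d + 1) * (c - q) + ((n : ℤ) - t) * q) := by
        rw [hx]; ring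
      linarith [key2]
    by_cases hT : (t : ℤ) = 0
    · have hq00 : q = 0 := by omega
      have h1 : c * 1 ≤ c * x := mul_le_mul_of_nonneg_left hx1 hc0
      rw [mul_one] at h1
      have h2 : (x + (t : ℤ)) * q = 0 := by rw [hq00, mul_zero]
      have hc00 : c ≤ 0 := by linarith
      linarith
    · have hT1 : 1 ≤ (t : ℤ) := by omega
      have htc : (t : ℤ) ≤ c := by linarith
      have hTx : (t : ℤ) * x ≤ (x + t) * q :=
        le_trans (mul_le_mul_of_nonneg_right htc (by linarith)) hcx
      have h5a : (x + (t : ℤ)) * (5 * q) ≤ (x + (t : ℤ)) * t :=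
        mul_le_mul_of_nonneg_left hqT (by linarith)
      have e3 : (x + (t : ℤ)) * (5 * q) = 5 * ((x + (t : ℤ)) * q) := by ring
      have e4 : (x + (t : ℤ)) * t = (t : ℤ) * x + (t : ℤ) * t := by ring
      have h6 : (t : ℤ) * (4 * x) ≤ (t : ℤ) * t := by
        have e5 : (t : ℤ) * (4 * x) = 5 * ((t : ℤ) * x) - (t : ℤ) * x := by ring
        linarith
      have h4 : 4 * x ≤ (t : ℤ) := le_of_mul_le_mul_left h6 (by linarith)
      linarith
end
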